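/- arXiv:1510.00731 — 3 statements merged into one kernel-verified Lean document; each statement's English description precedes it below -/
import Mathlib

section
/- For all integers p ≥ 0 and n ≥ 1, p! + ∑_{t=0}^{p} s(p+1, t+1) · S_t(n) = p! · C(n+p+1, p+1), where s(a,b) is the unsigned Stirling number of the first kind and S_t(n) = ∑_{k=1}^{n} k^t. -/
/-!
The unsigned Stirling numbers of the first kind are the coefficients of the rising factorial
`x (x + 1) ⋯ (x + m - 1)`. Taking `m = p + 1` and dividing by `x` shows
`∑ₜ s(p+1, t+1) kᵗ = (k + 1) ⋯ (k + p) = p! · C(k + p, p)`. Swapping the two sums, the left-hand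
side becomes `p! · ∑_{k=0}^{n} C(k + p, p)`, the `k = 0` term being the extra `p!`, and the
hockey-stick identity finishes.
-/

def stirling : ℕ → ℕ → ℕ
  | 0, 0 => 1
  | 0, _ + 1 => 0
  | _ + 1, 0 => 0
  | n + 1, k + 1 => n * stirling n (k + 1) + stirling n k

open Finset Polynomial Nat

theorem stirling_eq_stirlingFirst : ∀ n k, stirling n k = stirlingFirst n k
  | 0, 0 | 0, _ + 1 | _ + 1, 0 => rfl
  | n + 1, k + 1 => by
    rw [stirling, stirlingFirst_succ_succ, stirling_eq_stirlingFirst n, stirling_eq_stirlingFirst n]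

namespace Polynomial

theorem coeff_ascPochhammer {R : Type*} [Semiring R] (n k : ℕ) :
    (ascPochhammer R n).coeff k = stirlingFirst n k := by
  induction n generalizing k with
  | zero => cases k <;> simp [coeff_one]
  | succ n ih =>
    rw [ascPochhammer_succ_right, mul_add, coeff_add, coeff_mul_natCast, ← Nat.cast_comm]
    cases k with
    | zero => cases n <;> simp [ih]
    | succ k => simp [coeff_mul_X, ih, stirlingFirst_succ_succ, add_comm]

variable {R : Type*} [CommSemiring R]

theorem eval_eq_sum_range_of_coeff_eq_zero {p : R[X]} {n : ℕ}
    (hp : ∀ k, n < k → p.coeff k = 0) (x : R) :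
    p.eval x = ∑ k ∈ range (n + 1), p.coeff k * x ^ k :=
  eval_eq_sum_range' (Nat.lt_succ_of_le (natDegree_le_iff_coeff_eq_zero.mpr hp)) x

theorem eval_ascPochhammer_eq_sum_stirlingFirst (n : ℕ) (x : R) :
    (ascPochhammer R n).eval x = ∑ k ∈ range (n + 1), (stirlingFirst n k : R) * x ^ k := by
  rw [eval_eq_sum_range_of_coeff_eq_zero (n := n)]
  · simp only [coeff_ascPochhammer]
  · intro k hk
    rw [coeff_ascPochhammer, stirlingFirst_eq_zero_of_lt hk, Nat.cast_zero]

theorem eval_add_one_ascPochhammer_eq_sum_stirlingFirst (n : ℕ) (x : R) :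
    (ascPochhammer R n).eval (x + 1) =
      ∑ k ∈ range (n + 1), (stirlingFirst (n + 1) (k + 1) : R) * x ^ k := by
  have hcoeff (k : ℕ) :
      ((ascPochhammer R n).comp (X + 1)).coeff k = stirlingFirst (n + 1) (k + 1) := by
    rw [← coeff_ascPochhammer, ascPochhammer_succ_left, coeff_X_mul]
  have hx : x + 1 = (X + 1 : R[X]).eval x := by simp
  rw [hx, ← eval_comp, eval_eq_sum_range_of_coeff_eq_zero (n := n)]
  · simp only [hcoeff]
  · intro k hk
    rw [hcoeff, stirlingFirst_eq_zero_of_lt (by omega), Nat.cast_zero]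

end Polynomial

theorem stmt_1_general (p n : ℕ) :
    Nat.factorial p + ∑ t ∈ Finset.range (p + 1),
        stirling (p + 1) (t + 1) * ∑ k ∈ Finset.Icc 1 n, k ^ t =
      Nat.factorial p * (n + p + 1).choose (p + 1) := by
  have hrising (k : ℕ) :
      ∑ t ∈ range (p + 1), stirling (p + 1) (t + 1) * k ^ t = p ! * (k + p).choose p := by
    simpa [stirling_eq_stirlingFirst, ascPochhammer_nat_eq_ascFactorial,
      ascFactorial_eq_factorial_mul_choose] using
      (eval_add_one_ascPochhammer_eq_sum_stirlingFirst p k).symm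
  calc p ! + ∑ t ∈ range (p + 1), stirling (p + 1) (t + 1) * ∑ k ∈ Icc 1 n, k ^ t
      = p ! * (0 + p).choose p + ∑ k ∈ Icc 1 n, p ! * (k + p).choose p := by
        simp only [mul_sum]
        rw [sum_comm, zero_add, choose_self, mul_one]
        simp only [← mul_sum, hrising]
    _ = p ! * ∑ k ∈ range (n + 1), (k + p).choose p := by
        rw [mul_sum, sum_range_eq_add_Ico _ (by omega : 0 < n + 1), Ico_add_one_right_eq_Icc]
    _ = p ! * (n + p + 1).choose (p + 1) := by rw [sum_range_add_choose]

theorem stmt_1 (p n : ℕ) (hn : 1 ≤ n) :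
    Nat.factorial p + ∑ t ∈ Finset.range (p + 1),
        stirling (p + 1) (t + 1) * ∑ k ∈ Finset.Icc 1 n, k ^ t =
      Nat.factorial p * (n + p + 1).choose (p + 1) :=
  stmt_1_general p n
end

section
/- For all integers p ≥ 0 and n ≥ 1, ∑_{k=1}^{n} C(k+p, p) · H_k = C(n+p+1, p+1) · H_n − (1/(p+1)) · (C(n+p+1, p+1) − 1), where H_k is the k-th harmonic number. -/
/-!
Induction on `n`. Pascal's rule splits `C(n+p+2, p+1)` as `C(n+p+1, p+1) + C(n+p+1, p)`, and the
inductive step then reduces to the absorption identity `(p+1) C(n+p+1, p+1) = (n+1) C(n+p+1, p)`,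
which matches the new harmonic term `1/(n+1)` against the correction `1/(p+1)`.
-/

lemma succ_mul_choose_succ_eq_choose_mul (p n : ℕ) :
    (p + 1 : ℚ) * (n + p + 1).choose (p + 1) = (n + 1) * (n + p + 1).choose p := by
  have h := Nat.choose_succ_right_eq (n + p + 1) p
  rw [show n + p + 1 - p = n + 1 by omega] at h
  exact_mod_cast (mul_comm _ _).trans (h.trans (mul_comm _ _))

theorem stmt_6_general (p n : ℕ) :
    ∑ k ∈ Finset.Icc 1 n, ((k + p).choose p : ℚ) * harmonic k =
      ((n + p + 1).choose (p + 1) : ℚ) * harmonic n -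
        (1 / (p + 1 : ℚ)) * (((n + p + 1).choose (p + 1) : ℚ) - 1) := by
  induction n with
  | zero => simp
  | succ n ih =>
    rw [Finset.sum_Icc_succ_top (by omega), ih, harmonic_succ,
      show n + 1 + p + 1 = n + p + 1 + 1 by omega, Nat.choose_succ_succ' (n + p + 1) p,
      show n + 1 + p = n + p + 1 by omega]
    have absorb := succ_mul_choose_succ_eq_choose_mul p n
    push_cast
    field_simp
    linear_combination -absorb

theorem stmt_6 (p n : ℕ) (hn : 1 ≤ n) :
    ∑ k ∈ Finset.Icc 1 n, ((k + p).choose p : ℚ) * harmonic k =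
      ((n + p + 1).choose (p + 1) : ℚ) * harmonic n -
        (1 / (p + 1 : ℚ)) * (((n + p + 1).choose (p + 1) : ℚ) - 1) :=
  stmt_6_general p n
end

section
/- For all positive integers r and p ≥ 0, ∑_{t=0}^{p} r^t · s(p+1, t+1) = p! · (C(r+p+1, p+1) − 1) − ∑_{j=1}^{r-1} ∑_{t=0}^{p} j^t · s(p+1, t+1). -/
/-!
Summing the Stirling recurrence against powers shows that
`∑ₜ j^t s(p+1, t+1) = (j+1)(j+2)⋯(j+p) = p! · C(j+p, p)`. By the hockey-stick identity the sum of
these over `j = 1, …, r` is `p! · (C(r+p+1, p+1) - 1)`, and the theorem isolates the term `j = r`.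
-/

open Finset Polynomial

theorem stirling_eq_zero_of_lt {n k : ℕ} (h : n < k) : stirling n k = 0 := by
  induction n generalizing k with
  | zero => obtain ⟨k, rfl⟩ := Nat.exists_eq_succ_of_ne_zero (by omega : k ≠ 0); rfl
  | succ n ih =>
    obtain ⟨k, rfl⟩ := Nat.exists_eq_succ_of_ne_zero (by omega : k ≠ 0)
    simp only [stirling, ih (by omega : n < k + 1), ih (by omega : n < k), mul_zero]

theorem stirling_succ_succ (n k : ℕ) :
    stirling (n + 1) (k + 1) = n * stirling n (k + 1) + stirling n k := rfl

/-- The generating polynomial of `s(p+1, ·)` is `x (x+1) ⋯ (x+p)`; this is it divided by `x`. -/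
theorem sum_pow_mul_stirling_succ {R : Type*} [CommSemiring R] (p : ℕ) (x : R) :
    ∑ t ∈ range (p + 1), x ^ t * (stirling (p + 1) (t + 1) : R) =
      (ascPochhammer R p).eval (x + 1) := by
  induction p with
  | zero => simp [stirling]
  | succ p ih =>
    set A := ∑ t ∈ range (p + 1), x ^ t * (stirling (p + 1) (t + 1) : R)
    have hfirst : ∑ t ∈ range (p + 2), x ^ t * (stirling (p + 1) (t + 1) : R) = A := by
      rw [sum_range_succ, stirling_eq_zero_of_lt (by omega), Nat.cast_zero, mul_zero, add_zero]
    have hsecond : ∑ t ∈ range (p + 2), x ^ t * (stirling (p + 1) t : R) = x * A := by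
      rw [sum_range_succ', mul_sum]
      simp only [stirling, Nat.cast_zero, mul_zero, add_zero, pow_succ]
      exact sum_congr rfl fun t _ => by ring
    calc ∑ t ∈ range (p + 2), x ^ t * (stirling (p + 2) (t + 1) : R)
        = (p + 1) * ∑ t ∈ range (p + 2), x ^ t * (stirling (p + 1) (t + 1) : R)
          + ∑ t ∈ range (p + 2), x ^ t * (stirling (p + 1) t : R) := by
          simp only [stirling_succ_succ (p + 1), mul_sum, ← sum_add_distrib]
          push_cast
          exact sum_congr rfl fun t _ => by ring
      _ = (x + 1 + p) * A := by rw [hfirst, hsecond]; ring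
      _ = (ascPochhammer R (p + 1)).eval (x + 1) := by
          rw [ih, ascPochhammer_succ_eval, mul_comm]

theorem sum_pow_mul_stirling_succ_eq_factorial_mul_choose (p j : ℕ) :
    ∑ t ∈ range (p + 1), (j : ℤ) ^ t * (stirling (p + 1) (t + 1) : ℤ) =
      (p.factorial : ℤ) * ((j + p).choose p : ℤ) := by
  rw [sum_pow_mul_stirling_succ, ← Nat.cast_one, ← Nat.cast_add, ← ascPochhammer_eval_cast,
    ascPochhammer_nat_eq_ascFactorial, Nat.ascFactorial_eq_factorial_mul_choose, Nat.cast_mul]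

theorem sum_Icc_one_add_choose (p r : ℕ) :
    ∑ j ∈ Icc 1 r, (j + p).choose p + 1 = (r + p + 1).choose (p + 1) := by
  rw [← Nat.sum_range_add_choose, sum_range_succ', zero_add, Nat.choose_self, range_eq_Ico,
    sum_Ico_add' (fun j => (j + p).choose p), zero_add, Ico_add_one_right_eq_Icc]

theorem stmt_15 (p r : ℕ) (hr : 1 ≤ r) :
    ∑ t ∈ Finset.range (p + 1), (r : ℤ) ^ t * (stirling (p + 1) (t + 1) : ℤ) =
      (Nat.factorial p : ℤ) * (((r + p + 1).choose (p + 1) : ℤ) - 1) -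
        ∑ j ∈ Finset.Icc 1 (r - 1),
          ∑ t ∈ Finset.range (p + 1), (j : ℤ) ^ t * (stirling (p + 1) (t + 1) : ℤ) := by
  obtain ⟨n, rfl⟩ := Nat.exists_eq_add_of_le' hr
  have hsum : ∑ j ∈ Icc 1 (n + 1),
      ∑ t ∈ range (p + 1), (j : ℤ) ^ t * (stirling (p + 1) (t + 1) : ℤ) =
        (p.factorial : ℤ) * (((n + 1 + p + 1).choose (p + 1) : ℤ) - 1) := by
    simp only [sum_pow_mul_stirling_succ_eq_factorial_mul_choose, ← mul_sum,
      ← sum_Icc_one_add_choose p (n + 1)]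
    push_cast
    ring
  rw [sum_Icc_succ_top (by omega)] at hsum
  rw [← hsum, add_tsub_cancel_right]
  ring
end
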